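/- Let U and V be k-dimensional linear subspaces of ℝⁿ and let a ∈ U^⊥. Then a − π_V(a) ∈ V^⊥, and identifying the affine flat U + a with the pair (π_U, a) and the affine flat V + a with the pair (π_V, a − π_V(a)), their distance satisfies d_𝒜(U + a, V + a) = ‖π_U − π_V‖_op + ‖π_V(a)‖ ≤ (‖a‖ + 1)·‖π_U − π_V‖_op. -/

import Mathlib

open Set

/-- The orthogonal projection of `ℝⁿ` onto a subspace `U`, as a continuous linear map
`ℝⁿ → ℝⁿ`. -/
noncomputable def projCLM {n : ℕ} (U : Submodule ℝ (EuclideanSpace ℝ (Fin n))) :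
    EuclideanSpace ℝ (Fin n) →L[ℝ] EuclideanSpace ℝ (Fin n) :=
  U.subtypeL.comp (U.orthogonalProjection)

theorem Submodule.norm_starProjection_le_of_mem_orthogonal {𝕜 E : Type*} [RCLike 𝕜]
    [NormedAddCommGroup E] [InnerProductSpace 𝕜 E] {U V : Submodule 𝕜 E}
    [U.HasOrthogonalProjection] [V.HasOrthogonalProjection] {a : E} (ha : a ∈ Uᗮ) :
    ‖V.starProjection a‖ ≤ ‖U.starProjection - V.starProjection‖ * ‖a‖ := by
  have hUa : U.starProjection a = 0 := U.starProjection_apply_eq_zero_iff.mpr ha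
  calc ‖V.starProjection a‖ = ‖(U.starProjection - V.starProjection) a‖ := by
        rw [sub_apply, hUa, zero_sub, norm_neg]
    _ ≤ ‖U.starProjection - V.starProjection‖ * ‖a‖ := ContinuousLinearMap.le_opNorm _ a

theorem projCLM_eq_starProjection {n : ℕ} (U : Submodule ℝ (EuclideanSpace ℝ (Fin n))) :
    projCLM U = U.starProjection :=
  rfl

theorem dist_affine_translate_general
    (n : ℕ) (U V : Submodule ℝ (EuclideanSpace ℝ (Fin n)))
    (a : EuclideanSpace ℝ (Fin n)) (ha : a ∈ Uᗮ) :
    a - projCLM V a ∈ Vᗮ ∧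
      ‖projCLM U - projCLM V‖ + ‖projCLM V a‖
        ≤ (‖a‖ + 1) * ‖projCLM U - projCLM V‖ := by
  simp only [projCLM_eq_starProjection]
  refine ⟨V.sub_starProjection_mem_orthogonal a, ?_⟩
  have h := Submodule.norm_starProjection_le_of_mem_orthogonal (V := V) ha
  linarith

/-- **Lemma 2.3.** For `k`-dimensional subspaces `U, V ⊆ ℝⁿ` and `a ∈ U^⊥`, the vector
`a - π_V(a)` lies in `V^⊥`, and (identifying the affine flat `U + a` with `(π_U, a)` and
`V + a` with `(π_V, a - π_V(a))`) one has
`d_𝒜(U + a, V + a) = ‖π_U - π_V‖ + ‖π_V(a)‖ ≤ (‖a‖ + 1)·‖π_U - π_V‖`. -/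
theorem dist_affine_translate
    (n k : ℕ) (U V : Submodule ℝ (EuclideanSpace ℝ (Fin n)))
    (hU : Module.finrank ℝ U = k) (hV : Module.finrank ℝ V = k)
    (a : EuclideanSpace ℝ (Fin n)) (ha : a ∈ Uᗮ) :
    a - projCLM V a ∈ Vᗮ ∧
      ‖projCLM U - projCLM V‖ + ‖projCLM V a‖
        ≤ (‖a‖ + 1) * ‖projCLM U - projCLM V‖ :=
  dist_affine_translate_general n U V a ha
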